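/- Let r, m ≥ 1 and let P : ℤ^r → ℂ^{m×m} be the symbol of a square system of Fourier multipliers on the torus 𝕋^r whose entries are polynomially bounded, i.e. there exist C_P > 0 and τ ∈ ℝ with |P(ξ)_{ji}| ≤ C_P(1+‖ξ‖²)^{τ/2} for all ξ ∈ ℤ^r and all 1 ≤ i, j ≤ m. Suppose there exist C > 0, k ∈ ℝ and a finite set F ⊆ ℤ^r such that |det P(ξ)| ≥ C(1+‖ξ‖²)^{k/2} for all ξ ∈ ℤ^r \ F. Then for every u : ℤ^r → ℂ^m of polynomial growth such that ξ ↦ P(ξ)u(ξ) is rapidly decreasing, u is itself rapidly decreasing (i.e. the system is globally hypoelliptic). -/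

import Mathlib

noncomputable section

open scoped BigOperators

/-- Euclidean (ℓ²) norm of a complex vector. -/
def l2norm {n : Type*} [Fintype n] (v : n → ℂ) : ℝ :=
  Real.sqrt (∑ i, ‖v i‖ ^ 2)

/-- The weight `1 + ‖ξ‖²` for a frequency `ξ ∈ ℤ^r`. -/
def wt {r : ℕ} (ξ : Fin r → ℤ) : ℝ :=
  1 + ∑ i, ((ξ i : ℝ)) ^ 2

/-- A vector-valued sequence indexed by `ℤ^r` is rapidly decreasing. -/
def RapidDecayV {r n : ℕ} (u : (Fin r → ℤ) → (Fin n → ℂ)) : Prop :=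
  ∀ M : ℝ, 0 < M → ∃ C : ℝ, 0 < C ∧ ∀ ξ, l2norm (u ξ) ≤ C * wt ξ ^ (-(M / 2))

/-- A vector-valued sequence indexed by `ℤ^r` has polynomial growth. -/
def PolyGrowthV {r n : ℕ} (u : (Fin r → ℤ) → (Fin n → ℂ)) : Prop :=
  ∃ C N : ℝ, 0 < C ∧ 0 < N ∧ ∀ ξ, l2norm (u ξ) ≤ C * wt ξ ^ (N / 2)

/-! Cramer's rule `adj P · P = det P • 1` gives `|det P(ξ)| ‖u(ξ)‖ ≤ ‖adj P(ξ)‖ ‖P(ξ) u(ξ)‖`.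
The entries of the adjugate are minors of `P(ξ)`, hence polynomially bounded, and off the finite
set `F` the factor `|det P(ξ)|⁻¹` is polynomially bounded too. So off `F`, `‖u(ξ)‖` is a polynomial
weight times a rapidly decreasing sequence, and the finitely many values on `F` cannot spoil rapid
decay. -/

open scoped Matrix

lemma one_le_wt {r : ℕ} (ξ : Fin r → ℤ) : 1 ≤ wt ξ :=
  le_add_of_nonneg_right (Finset.sum_nonneg fun _ _ => sq_nonneg _)

lemma wt_pos {r : ℕ} (ξ : Fin r → ℤ) : 0 < wt ξ :=
  zero_lt_one.trans_le (one_le_wt ξ)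

lemma le_abs_add_one_mul_wt_rpow_abs {r : ℕ} (ξ : Fin r → ℤ) (c t : ℝ) :
    c * wt ξ ^ t ≤ (|c| + 1) * wt ξ ^ |t| := by
  have hw := one_le_wt ξ
  gcongr ?_ * ?_
  · exact (le_abs_self c).trans (le_add_of_nonneg_right zero_le_one)
  · exact Real.rpow_le_rpow_of_exponent_le hw (le_abs_self t)

lemma one_le_abs_add_one_mul_wt_rpow_abs {r : ℕ} (ξ : Fin r → ℤ) (c t : ℝ) :
    1 ≤ (|c| + 1) * wt ξ ^ |t| :=
  one_le_mul_of_one_le_of_one_le (le_add_of_nonneg_left (abs_nonneg c))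
    (Real.one_le_rpow (one_le_wt ξ) (abs_nonneg t))

section L2Norm

variable {n : Type*} [Fintype n]

lemma l2norm_eq_norm_toLp (v : n → ℂ) : l2norm v = ‖WithLp.toLp 2 v‖ :=
  (EuclideanSpace.norm_eq _).symm

lemma l2norm_nonneg (v : n → ℂ) : 0 ≤ l2norm v :=
  Real.sqrt_nonneg _

lemma norm_le_l2norm (v : n → ℂ) (i : n) : ‖v i‖ ≤ l2norm v := by
  rw [l2norm_eq_norm_toLp]
  exact PiLp.norm_apply_le (WithLp.toLp 2 v) i

lemma l2norm_smul (c : ℂ) (v : n → ℂ) : l2norm (c • v) = ‖c‖ * l2norm v := by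
  rw [l2norm_eq_norm_toLp, l2norm_eq_norm_toLp, WithLp.toLp_smul, norm_smul]

lemma l2norm_le_sum_norm (v : n → ℂ) : l2norm v ≤ ∑ i, ‖v i‖ :=
  Real.sqrt_le_iff.mpr ⟨Finset.sum_nonneg fun _ _ => norm_nonneg _,
    Finset.sum_sq_le_sq_sum_of_nonneg fun _ _ => norm_nonneg _⟩

lemma l2norm_mulVec_le {B : ℝ} (A : Matrix n n ℂ) (hA : ∀ i j, ‖A i j‖ ≤ B) (x : n → ℂ) :
    l2norm (A *ᵥ x) ≤ Fintype.card n ^ 2 * B * l2norm x := by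
  have hx := l2norm_nonneg x
  calc l2norm (A *ᵥ x) ≤ ∑ i, ‖(A *ᵥ x) i‖ := l2norm_le_sum_norm _
    _ ≤ ∑ i, ∑ j, ‖A i j‖ * ‖x j‖ := by
        gcongr with i
        refine (norm_sum_le _ fun j => A i j * x j).trans_eq ?_
        simp only [norm_mul]
    _ ≤ ∑ _i : n, ∑ _j : n, B * l2norm x := by
        gcongr with i _ j
        · exact (norm_nonneg _).trans (hA i j)
        · exact hA i j
        · exact norm_le_l2norm x j
    _ = Fintype.card n ^ 2 * B * l2norm x := by
        simp only [Finset.sum_const, Finset.card_univ, nsmul_eq_mul]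
        ring

end L2Norm

section Cramer

variable {n : Type*} [Fintype n] [DecidableEq n]

lemma norm_adjugate_apply_le {B : ℝ} (A : Matrix n n ℂ) (hA : ∀ i j, ‖A i j‖ ≤ B) (hB : 1 ≤ B)
    (i j : n) : ‖A.adjugate i j‖ ≤ (Fintype.card n).factorial * B ^ Fintype.card n := by
  rw [Matrix.adjugate_apply, ← nsmul_eq_mul]
  refine Matrix.det_le (abv := IsAbsoluteValue.toAbsoluteValue (norm : ℂ → ℝ)) fun a b => ?_
  change ‖A.updateRow j (Pi.single i 1) a b‖ ≤ B
  rw [Matrix.updateRow_apply]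
  split_ifs
  · rcases eq_or_ne b i with rfl | hb
    · simpa using hB
    · simpa [hb] using zero_le_one.trans hB
  · exact hA a b

lemma norm_det_mul_l2norm_le {B : ℝ} (A : Matrix n n ℂ) (hA : ∀ i j, ‖A i j‖ ≤ B) (hB : 1 ≤ B)
    (x : n → ℂ) :
    ‖A.det‖ * l2norm x ≤
      Fintype.card n ^ 2 * ((Fintype.card n).factorial * B ^ Fintype.card n) * l2norm (A *ᵥ x) := by
  have hcramer : A.adjugate *ᵥ (A *ᵥ x) = A.det • x := by
    rw [Matrix.mulVec_mulVec, Matrix.adjugate_mul, Matrix.smul_mulVec, Matrix.one_mulVec]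
  rw [← l2norm_smul, ← hcramer]
  exact l2norm_mulVec_le _ (norm_adjugate_apply_le A hA hB) _

end Cramer

section RapidDecay

variable {r n p : ℕ}

lemma RapidDecayV.of_forall_notMem {u : (Fin r → ℤ) → Fin n → ℂ} {F : Set (Fin r → ℤ)}
    (hF : F.Finite) (h : ∀ M : ℝ, 0 < M → ∃ C : ℝ, ∀ ξ ∉ F, l2norm (u ξ) ≤ C * wt ξ ^ (-(M / 2))) :
    RapidDecayV u := by
  intro M hM
  obtain ⟨C, hC⟩ := h M hM
  obtain ⟨D, hD⟩ := (hF.image fun ξ => l2norm (u ξ) * wt ξ ^ (M / 2)).bddAbove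
  refine ⟨max (max C D) 1, lt_max_of_lt_right zero_lt_one, fun ξ => ?_⟩
  have hw : 0 ≤ wt ξ ^ (-(M / 2)) := Real.rpow_nonneg (wt_pos ξ).le _
  by_cases hξ : ξ ∈ F
  · calc l2norm (u ξ) = l2norm (u ξ) * wt ξ ^ (M / 2) * wt ξ ^ (-(M / 2)) := by
          rw [mul_assoc, ← Real.rpow_add (wt_pos ξ), add_neg_cancel, Real.rpow_zero, mul_one]
      _ ≤ D * wt ξ ^ (-(M / 2)) := mul_le_mul_of_nonneg_right (hD ⟨ξ, hξ, rfl⟩) hw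
      _ ≤ _ := mul_le_mul_of_nonneg_right ((le_max_right C D).trans (le_max_left _ _)) hw
  · calc l2norm (u ξ) ≤ C * wt ξ ^ (-(M / 2)) := hC ξ hξ
      _ ≤ _ := mul_le_mul_of_nonneg_right ((le_max_left C D).trans (le_max_left _ _)) hw

lemma RapidDecayV.of_le_wt_rpow_mul {u : (Fin r → ℤ) → Fin n → ℂ} {v : (Fin r → ℤ) → Fin p → ℂ}
    (hv : RapidDecayV v) {F : Set (Fin r → ℤ)} (hF : F.Finite) (A s : ℝ)
    (h : ∀ ξ ∉ F, l2norm (u ξ) ≤ A * wt ξ ^ s * l2norm (v ξ)) : RapidDecayV u := by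
  refine .of_forall_notMem hF fun M hM => ?_
  obtain ⟨C, hC, hvC⟩ := hv (M + 2 * |s|) (by positivity)
  refine ⟨|A| * C, fun ξ hξ => ?_⟩
  have hw := wt_pos ξ
  calc l2norm (u ξ) ≤ A * wt ξ ^ s * l2norm (v ξ) := h ξ hξ
    _ ≤ |A| * wt ξ ^ s * (C * wt ξ ^ (-((M + 2 * |s|) / 2))) := by
        have hws := Real.rpow_nonneg hw.le s
        exact mul_le_mul (mul_le_mul_of_nonneg_right (le_abs_self A) hws) (hvC ξ)
          (l2norm_nonneg _) (mul_nonneg (abs_nonneg A) hws)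
    _ = |A| * C * wt ξ ^ (s + -((M + 2 * |s|) / 2)) := by
        rw [Real.rpow_add hw]
        ring
    _ ≤ |A| * C * wt ξ ^ (-(M / 2)) := by
        gcongr
        · exact one_le_wt ξ
        · linarith [le_abs_self s]

end RapidDecay

theorem square_system_GH_det_general (r m : ℕ)
    (P : (Fin r → ℤ) → Matrix (Fin m) (Fin m) ℂ)
    (CP τ : ℝ)
    (hentries : ∀ ξ, ∀ j i : Fin m, ‖P ξ j i‖ ≤ CP * wt ξ ^ (τ / 2))
    (C k : ℝ) (hC : 0 < C) (F : Set (Fin r → ℤ)) (hF : F.Finite)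
    (hdet : ∀ ξ, ξ ∉ F → ‖(P ξ).det‖ ≥ C * wt ξ ^ (k / 2)) :
    ∀ u : (Fin r → ℤ) → (Fin m → ℂ), PolyGrowthV u →
      RapidDecayV (fun ξ => (P ξ).mulVec (u ξ)) → RapidDecayV u := by
  intro u _ hPu
  refine hPu.of_le_wt_rpow_mul hF (m ^ 2 * (m.factorial * (|CP| + 1) ^ m) / C)
    (m * |τ / 2| - k / 2) fun ξ hξ => ?_
  have hw := wt_pos ξ
  have hB : ∀ j i, ‖P ξ j i‖ ≤ (|CP| + 1) * wt ξ ^ |τ / 2| := fun j i =>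
    (hentries ξ j i).trans (le_abs_add_one_mul_wt_rpow_abs ξ CP _)
  have hcramer := norm_det_mul_l2norm_le (P ξ) hB (one_le_abs_add_one_mul_wt_rpow_abs ξ CP _) (u ξ)
  rw [Fintype.card_fin, mul_pow, ← Real.rpow_mul_natCast hw.le] at hcramer
  have hdet_pos : 0 < C * wt ξ ^ (k / 2) := mul_pos hC (Real.rpow_pos_of_pos hw _)
  rw [← mul_le_mul_iff_of_pos_left hdet_pos]
  calc C * wt ξ ^ (k / 2) * l2norm (u ξ) ≤ ‖(P ξ).det‖ * l2norm (u ξ) :=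
        mul_le_mul_of_nonneg_right (hdet ξ hξ) (l2norm_nonneg _)
    _ ≤ _ := hcramer
    _ = _ := by
        rw [Real.rpow_sub hw]
        field_simp

theorem square_system_GH_det (r m : ℕ) (hr : 1 ≤ r) (hm : 1 ≤ m)
    (P : (Fin r → ℤ) → Matrix (Fin m) (Fin m) ℂ)
    (CP τ : ℝ) (hCP : 0 < CP)
    (hentries : ∀ ξ, ∀ j i : Fin m, ‖P ξ j i‖ ≤ CP * wt ξ ^ (τ / 2))
    (C k : ℝ) (hC : 0 < C) (F : Set (Fin r → ℤ)) (hF : F.Finite)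
    (hdet : ∀ ξ, ξ ∉ F → ‖(P ξ).det‖ ≥ C * wt ξ ^ (k / 2)) :
    ∀ u : (Fin r → ℤ) → (Fin m → ℂ), PolyGrowthV u →
      RapidDecayV (fun ξ => (P ξ).mulVec (u ξ)) → RapidDecayV u :=
  square_system_GH_det_general r m P CP τ hentries C k hC F hF hdet
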